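/- arXiv:1111.3559 — 5 statements merged into one kernel-verified Lean document; each statement's English description precedes it below -/
import Mathlib

section
/- Let d = 1, V : ℝ → ℝ continuous and periodic with period ℓ > 0, and E > sup V. For an initial condition (p₀,q₀) with p₀ > 0 and ½p₀² + V(q₀) = E, the asymptotic velocity exists and equals v = ℓ / τ with τ = ∫₀^ℓ dq / √(2(E - V(q))). -/
/-!
Energy conservation and `E > V` keep `p` away from `0`, so by Darboux's theorem (`p = q'`)
`q' = p = √(2(E - V q)) > 0` for all time. Hence with `S x = ∫₀ˣ dq / √(2(E - V q))`
the trajectory satisfies `S (q t) = t + S (q 0)`. Since the integrand is `ℓ`-periodic,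
`S x - (τ / ℓ) x` is `ℓ`-periodic and continuous, hence bounded; therefore
`(τ / ℓ) q t = t + O(1)` and `q t / t → ℓ / τ`.
-/

open Real Filter MeasureTheory Topology

theorem tendsto_div_atTop_of_abs_mul_sub_le {x : ℝ → ℝ} {a C : ℝ} (ha : a ≠ 0)
    (h : ∀ t, |a * x t - t| ≤ C) : Tendsto (fun t => x t / t) atTop (𝓝 a⁻¹) := by
  have herr : Tendsto (fun t => (a * x t - t) / t) atTop (𝓝 0) := by
    refine squeeze_zero_norm' ?_ ((tendsto_const_nhds (x := C)).div_atTop tendsto_id)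
    filter_upwards [eventually_gt_atTop 0] with t ht
    rw [norm_div, Real.norm_eq_abs, Real.norm_eq_abs, abs_of_pos ht]
    exact div_le_div_of_nonneg_right (h t) ht.le
  have hlim := (herr.const_add 1).const_mul a⁻¹
  rw [add_zero, mul_one] at hlim
  refine hlim.congr' ?_
  filter_upwards [eventually_ne_atTop 0] with t ht
  field_simp
  ring

namespace Function.Periodic

variable {g : ℝ → ℝ} {T : ℝ}

theorem intervalIntegral_sub_mul_periodic (hg : Periodic g T) (hT : T ≠ 0)
    (h_int : ∀ a b, IntervalIntegrable g volume a b) :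
    Periodic (fun x => (∫ u in 0..x, g u) - x / T * ∫ u in 0..T, g u) T := by
  intro x
  simp only [hg.intervalIntegral_add_eq_add 0 x h_int, zero_add]
  field_simp
  ring

theorem exists_abs_intervalIntegral_sub_mul_le (hg : Periodic g T) (hT : T ≠ 0)
    (hcont : Continuous g) :
    ∃ C, ∀ x, |(∫ u in 0..x, g u) - x / T * ∫ u in 0..T, g u| ≤ C := by
  have h_int : ∀ a b, IntervalIntegrable g volume a b := hcont.intervalIntegrable
  have hcont' : Continuous fun x => (∫ u in 0..x, g u) - x / T * ∫ u in 0..T, g u := by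
    have := intervalIntegral.continuous_primitive h_int 0
    fun_prop
  obtain ⟨C, hC⟩ := isBounded_iff_forall_norm_le.1
    ((hg.intervalIntegral_sub_mul_periodic hT h_int).isBounded_of_continuous hT hcont')
  exact ⟨C, fun x => hC _ ⟨x, rfl⟩⟩

theorem tendsto_div_atTop_of_intervalIntegral_eq_add {x : ℝ → ℝ} {c : ℝ} (hg : Periodic g T)
    (hT : T ≠ 0) (hcont : Continuous g) (h₀ : ∫ u in 0..T, g u ≠ 0)
    (hx : ∀ t, ∫ u in 0..x t, g u = t + c) :
    Tendsto (fun t => x t / t) atTop (𝓝 (T / ∫ u in 0..T, g u)) := by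
  obtain ⟨C, hC⟩ := hg.exists_abs_intervalIntegral_sub_mul_le hT hcont
  rw [← inv_div]
  refine tendsto_div_atTop_of_abs_mul_sub_le (div_ne_zero h₀ hT) (C := |c| + C) fun t => ?_
  have hCt := hC (x t)
  rw [hx t] at hCt
  calc |(∫ u in 0..T, g u) / T * x t - t|
      = |c - (t + c - x t / T * ∫ u in 0..T, g u)| := by congr 1; ring
    _ ≤ |c| + |t + c - x t / T * ∫ u in 0..T, g u| := abs_sub _ _
    _ ≤ |c| + C := by gcongr

end Function.Periodic

theorem pos_of_hasDerivAt_of_ne_zero {q p : ℝ → ℝ} (hq : ∀ t, HasDerivAt q (p t) t)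
    (hne : ∀ t, p t ≠ 0) {t₀ : ℝ} (h₀ : 0 < p t₀) (t : ℝ) : 0 < p t := by
  rcases hasDerivWithinAt_forall_lt_or_forall_gt_of_forall_ne convex_univ
    (fun t _ => (hq t).hasDerivWithinAt) (fun t _ => hne t) with hneg | hpos
  · exact absurd (hneg t₀ trivial) h₀.not_gt
  · exact hpos t trivial

theorem intervalIntegral_comp_eq_add_of_mul_eq_one {f q p : ℝ → ℝ} (hf : Continuous f)
    (hq : ∀ t, HasDerivAt q (p t) t) (hfp : ∀ t, f (q t) * p t = 1) (t : ℝ) :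
    ∫ u in 0..q t, f u = t + ∫ u in 0..q 0, f u := by
  have hderiv : ∀ t, HasDerivAt (fun t => (∫ u in 0..q t, f u) - t) 0 t := fun t => by
    have h := ((intervalIntegral.integral_hasDerivAt_right (hf.intervalIntegrable 0 (q t))
      (hf.stronglyMeasurableAtFilter _ _) hf.continuousAt).comp t (hq t)).sub (hasDerivAt_id t)
    rwa [hfp t, sub_self] at h
  have := is_const_of_deriv_eq_zero (fun t => (hderiv t).differentiableAt)
    (fun t => (hderiv t).deriv) t 0
  linarith

theorem stmt6_general
    (V : ℝ → ℝ) (hV : Continuous V)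
    (ℓ : ℝ) (hℓ : 0 < ℓ) (hper : Function.Periodic V ℓ)
    (E : ℝ) (hE : sSup (Set.range V) < E)
    (p q : ℝ → ℝ) (p₀ : ℝ) (hp₀ : 0 < p₀)
    (hq : ∀ t, HasDerivAt q (p t) t)
    (hinitp : p 0 = p₀)
    (hcons : ∀ t, (1/2) * (p t)^2 + V (q t) = E) :
    Tendsto (fun T : ℝ => q T / T) atTop
      (nhds (ℓ / ∫ x in (0:ℝ)..ℓ, 1 / Real.sqrt (2 * (E - V x)))) := by
  set f : ℝ → ℝ := fun x => 1 / Real.sqrt (2 * (E - V x))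
  have hkin : ∀ x, 0 < 2 * (E - V x) := fun x => by
    have := le_csSup (hper.compact_of_continuous hℓ.ne' hV).bddAbove ⟨x, rfl⟩
    linarith
  have hfc : Continuous f :=
    continuous_const.div (by fun_prop) fun x => (Real.sqrt_pos.2 (hkin x)).ne'
  have hppos : ∀ t, 0 < p t := by
    refine pos_of_hasDerivAt_of_ne_zero hq (fun t ht => ?_) (hinitp ▸ hp₀)
    linarith [hcons t, hkin (q t), show p t ^ 2 = 0 by simp [ht]]
  have hfp : ∀ t, f (q t) * p t = 1 := fun t => by
    have hp_sq : 2 * (E - V (q t)) = p t ^ 2 := by linarith [hcons t]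
    simp only [f, hp_sq, Real.sqrt_sq (hppos t).le]
    exact one_div_mul_cancel (hppos t).ne'
  have hfper : Function.Periodic f ℓ := fun x => by simp only [f, hper x]
  exact hfper.tendsto_div_atTop_of_intervalIntegral_eq_add hℓ.ne' hfc
    (intervalIntegral.intervalIntegral_pos_of_pos (hfc.intervalIntegrable 0 ℓ)
      (fun x => one_div_pos.2 (Real.sqrt_pos.2 (hkin x))) hℓ).ne'
    (intervalIntegral_comp_eq_add_of_mul_eq_one hfc hq hfp)

/-- In one dimension with periodic continuous potential of period `ℓ`
and energy `E > sup V`, a trajectory with positive initial momentum has asymptotic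
velocity `ℓ / ∫₀^ℓ dq/√(2(E - V q))`. -/
theorem stmt6
    (V : ℝ → ℝ) (hV : Continuous V)
    (ℓ : ℝ) (hℓ : 0 < ℓ) (hper : Function.Periodic V ℓ)
    (E : ℝ) (hE : sSup (Set.range V) < E)
    (p q : ℝ → ℝ) (p₀ q₀ : ℝ) (hp₀ : 0 < p₀)
    (hq : ∀ t, HasDerivAt q (p t) t)
    (hp : ∀ t, HasDerivAt p (-(deriv V (q t))) t)
    (hinitp : p 0 = p₀) (hinitq : q 0 = q₀)
    (hen : (1/2) * p₀^2 + V q₀ = E)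
    (hcons : ∀ t, (1/2) * (p t)^2 + V (q t) = E) :
    Tendsto (fun T : ℝ => q T / T) atTop
      (nhds (ℓ / ∫ x in (0:ℝ)..ℓ, 1 / Real.sqrt (2 * (E - V x)))) :=
  stmt6_general V hV ℓ hℓ hper E hE p q p₀ hp₀ hq hinitp hcons
end

section
/- Let U : ℝ^d → [0,∞) be continuous with U(q) = Ũ(‖q‖) for a continuous Ũ : [0,∞) → [0,∞), and define g̃(r) := (d ∫₀^r x^{d-1} Ũ(x) dx)^{1/d} and g(q) := g̃(‖q‖) · q/‖q‖ for q ≠ 0, g(0) := 0. If Ũ is C¹ and strictly positive on an open annulus A = {q : a < ‖q‖ < b}, then g is differentiable on A with det(Dg)(q) = g̃'(‖q‖) · (g̃(‖q‖)/‖q‖)^{d-1} = U(q). -/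
open Real Filter MeasureTheory

private lemma hasFDerivAt_norm_of_ne {E : Type*} [NormedAddCommGroup E] [InnerProductSpace ℝ E]
    {x : E} (hx : x ≠ 0) :
    HasFDerivAt (fun y : E => ‖y‖) ((‖x‖⁻¹ : ℝ) • innerSL ℝ x) x := by
  have h1 : HasFDerivAt (fun y : E => ‖y‖ ^ 2) (2 • (innerSL ℝ x)) x :=
    (hasStrictFDerivAt_norm_sq x).hasFDerivAt
  have hx2 : (‖x‖ ^ 2 : ℝ) ≠ 0 := pow_ne_zero _ (norm_ne_zero_iff.2 hx)
  have h2 : HasDerivAt Real.sqrt (1 / (2 * Real.sqrt (‖x‖ ^ 2))) (‖x‖ ^ 2) :=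
    Real.hasDerivAt_sqrt hx2
  have h3 := h2.comp_hasFDerivAt x h1
  have heq : (Real.sqrt ∘ fun y : E => ‖y‖ ^ 2) = fun y : E => ‖y‖ := by
    funext y; simp [Function.comp, Real.sqrt_sq (norm_nonneg y)]
  rw [heq] at h3
  refine h3.congr_fderiv ?_
  rw [Real.sqrt_sq (norm_nonneg x)]
  ext v
  simp only [ContinuousLinearMap.coe_smul', Pi.smul_apply, innerSL_apply_apply, smul_eq_mul,
    ContinuousLinearMap.smul_apply, nsmul_eq_mul, Nat.cast_ofNat]
  have : ‖x‖ ≠ 0 := norm_ne_zero_iff.2 hx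
  field_simp

/-- The radial map `g(q) = g̃(‖q‖) q/‖q‖` with
`g̃(r) = (d ∫₀^r x^{d-1} Ũ(x) dx)^{1/d}` has Jacobian determinant
`det Dg(q) = g̃'(‖q‖)(g̃(‖q‖)/‖q‖)^{d-1} = U(q)` on an annulus where `Ũ` is `C¹`
and positive. -/
theorem stmt7 {d : ℕ} (hd : 1 ≤ d)
    (Ut : ℝ → ℝ) (hUt0 : ∀ r, 0 ≤ Ut r) (hUtc : Continuous Ut)
    (a b : ℝ) (ha : 0 ≤ a) (hab : a < b)
    (hC1 : ContDiffOn ℝ 1 Ut (Set.Ioo a b))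
    (hpos : ∀ r ∈ Set.Ioo a b, 0 < Ut r)
    (gt : ℝ → ℝ)
    (hgt : ∀ r, gt r = ((d : ℝ) * ∫ x in (0:ℝ)..r, x ^ (d - 1) * Ut x) ^ ((1:ℝ)/d))
    (g : EuclideanSpace ℝ (Fin d) → EuclideanSpace ℝ (Fin d))
    (hg0 : g 0 = 0)
    (hg : ∀ q : EuclideanSpace ℝ (Fin d), q ≠ 0 → g q = (gt ‖q‖ / ‖q‖) • q) :
    ∀ q : EuclideanSpace ℝ (Fin d), a < ‖q‖ → ‖q‖ < b →
      DifferentiableAt ℝ g q ∧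
      (fderiv ℝ g q).det = deriv gt ‖q‖ * (gt ‖q‖ / ‖q‖) ^ (d - 1) ∧
      (fderiv ℝ g q).det = Ut ‖q‖ := by
  classical
  intro q hqa hqb
  have hd0 : (d : ℝ) ≠ 0 := Nat.cast_ne_zero.2 (by omega)
  set r : ℝ := ‖q‖ with hr
  have hr0 : 0 < r := lt_of_le_of_lt ha hqa
  have hq0 : q ≠ 0 := by
    intro h
    rw [hr, h, norm_zero] at hr0
    exact lt_irrefl _ hr0
  set f : ℝ → ℝ := fun x => x ^ (d - 1) * Ut x with hf
  have hfc : Continuous f := (continuous_pow _).mul hUtc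
  have hint : ∀ u v : ℝ, IntervalIntegrable f volume u v := fun u v =>
    hfc.intervalIntegrable u v
  set s : ℝ := (d : ℝ) * ∫ x in (0:ℝ)..r, f x with hs
  have hIpos : 0 < ∫ x in (0:ℝ)..r, f x := by
    have h1 : (0:ℝ) ≤ ∫ x in (0:ℝ)..a, f x :=
      intervalIntegral.integral_nonneg ha fun x hx =>
        mul_nonneg (pow_nonneg hx.1 _) (hUt0 x)
    have h2 : 0 < ∫ x in a..r, f x := by
      refine intervalIntegral.intervalIntegral_pos_of_pos_on (hint a r) (fun x hx => ?_) hqa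
      exact mul_pos (pow_pos (lt_of_le_of_lt ha hx.1) _)
        (hpos x ⟨hx.1, hx.2.trans hqb⟩)
    have h3 : (∫ x in (0:ℝ)..a, f x) + ∫ x in a..r, f x = ∫ x in (0:ℝ)..r, f x :=
      intervalIntegral.integral_add_adjacent_intervals (hint 0 a) (hint a r)
    linarith
  have hspos : 0 < s := mul_pos (by exact_mod_cast Nat.cast_pos.2 (by omega)) hIpos
  have hgtr : gt r = s ^ ((1:ℝ)/d) := by rw [hgt r, hs, hf]
  have hgtrpos : 0 < gt r := by rw [hgtr]; exact Real.rpow_pos_of_pos hspos _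
  -- derivative of the integral
  have hI : HasDerivAt (fun t => ∫ x in (0:ℝ)..t, f x) (f r) r :=
    intervalIntegral.integral_hasDerivAt_right (hint 0 r)
      hfc.stronglyMeasurable.stronglyMeasurableAtFilter hfc.continuousAt
  set G : ℝ := s ^ ((1:ℝ)/d - 1) * (r ^ (d - 1) * Ut r) with hG
  have hgt' : HasDerivAt gt G r := by
    have h1 : HasDerivAt (fun t => (d : ℝ) * ∫ x in (0:ℝ)..t, f x) ((d : ℝ) * f r) r :=
      hI.const_mul _
    have h2 := h1.rpow_const (p := (1:ℝ)/d) (Or.inl (by rw [← hs]; exact hspos.ne'))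
    have heq : (fun t => ((d : ℝ) * ∫ x in (0:ℝ)..t, f x) ^ ((1:ℝ)/d)) = gt := by
      funext t; rw [hgt t, hf]
    rw [heq] at h2
    convert h2 using 1
    rw [hG, ← hs, hf]
    field_simp
  have hderiv : deriv gt r = G := hgt'.deriv
  set c : ℝ := gt r / r with hc
  have hcpos : 0 < c := div_pos hgtrpos hr0
  set D : ℝ := (G * r - gt r) / r ^ 2 with hD
  have hdiv : HasDerivAt (fun t => gt t / t) D r := by
    have h := hgt'.div (hasDerivAt_id r) hr0.ne'
    refine h.congr_deriv ?_
    rw [hD]; simp [id]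
  have hN : HasFDerivAt (fun y : EuclideanSpace ℝ (Fin d) => ‖y‖)
      ((r⁻¹ : ℝ) • innerSL ℝ q) q := hasFDerivAt_norm_of_ne hq0
  set ψ : EuclideanSpace ℝ (Fin d) →L[ℝ] ℝ := D • ((r⁻¹ : ℝ) • innerSL ℝ q) with hψ
  have hφ : HasFDerivAt (fun y : EuclideanSpace ℝ (Fin d) => gt ‖y‖ / ‖y‖) ψ q :=
    by have := hdiv.comp_hasFDerivAt q hN; exact this
  set L : EuclideanSpace ℝ (Fin d) →L[ℝ] EuclideanSpace ℝ (Fin d) :=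
    c • ContinuousLinearMap.id ℝ (EuclideanSpace ℝ (Fin d)) + ψ.smulRight q with hL
  have hsm : HasFDerivAt (fun y : EuclideanSpace ℝ (Fin d) => (gt ‖y‖ / ‖y‖) • y) L q := by
    have := hφ.smul (hasFDerivAt_id q)
    exact this
  have hEq : g =ᶠ[nhds q] fun y : EuclideanSpace ℝ (Fin d) => (gt ‖y‖ / ‖y‖) • y := by
    have hmem : ({0}ᶜ : Set (EuclideanSpace ℝ (Fin d))) ∈ nhds q :=
      isOpen_compl_singleton.mem_nhds (by simpa using hq0)
    filter_upwards [hmem] with y hy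
    exact hg y hy
  have hgF : HasFDerivAt g L q := hsm.congr_of_eventuallyEq hEq
  have hfd : fderiv ℝ g q = L := hgF.fderiv
  -- determinant computation
  set k : ℝ := D / r with hk
  have hsum : (∑ i, q i * q i) = r ^ 2 := by
    have h := real_inner_self_eq_norm_sq q
    rw [PiLp.inner_apply] at h
    rw [hr]; simpa [sq] using h
  have hdet : L.det = c ^ (d - 1) * G := by
    set B := (EuclideanSpace.basisFun (Fin d) ℝ).toBasis with hB
    rw [ContinuousLinearMap.det, ← LinearMap.det_toMatrix B]
    have hM : LinearMap.toMatrix B B (L : EuclideanSpace ℝ (Fin d) →ₗ[ℝ]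
        EuclideanSpace ℝ (Fin d)) =
        c • (1 + Matrix.replicateCol Unit (fun i => (k / c) * q i) * Matrix.replicateRow Unit (fun j => q j)) := by
      ext i j
      rw [LinearMap.toMatrix_apply]
      simp only [hB, OrthonormalBasis.coe_toBasis_repr_apply, OrthonormalBasis.coe_toBasis,
        EuclideanSpace.basisFun_apply, EuclideanSpace.basisFun_repr, hL,
        ContinuousLinearMap.coe_coe, ContinuousLinearMap.add_apply,
        ContinuousLinearMap.coe_smul', Pi.smul_apply, ContinuousLinearMap.id_apply,
        ContinuousLinearMap.smulRight_apply, hψ, innerSL_apply_apply,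
        EuclideanSpace.inner_single_right, RingHom.id_apply, conj_trivial, mul_one,
        Matrix.smul_apply, Matrix.add_apply, Matrix.mul_apply, Matrix.replicateCol_apply,
        Matrix.replicateRow_apply, Finset.univ_unique, Finset.sum_singleton, smul_eq_mul, one_mul]
      have hiapp : (c • (EuclideanSpace.single j 1 : EuclideanSpace ℝ (Fin d))
          + (D * (r⁻¹ * q j)) • q) i
          = c * (EuclideanSpace.single j 1 : EuclideanSpace ℝ (Fin d)) i
            + (D * (r⁻¹ * q j)) * q i := rfl
      rw [hiapp]
      rw [EuclideanSpace.single_apply]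
      by_cases hij : i = j
      · subst hij
        simp [Matrix.one_apply_eq, hk]
        field_simp
      · rw [if_neg hij, Matrix.one_apply_ne hij]
        rw [hk]
        field_simp
    rw [hM, Matrix.det_smul, Matrix.det_one_add_replicateCol_mul_replicateRow]
    have hdot : dotProduct (fun j => q j) (fun i => (k / c) * q i) = (k / c) * r ^ 2 := by
      simp only [dotProduct]
      rw [← hsum, Finset.mul_sum]
      congr 1; funext i; ring
    rw [hdot]
    have hcd : c ^ Fintype.card (Fin d) = c ^ (d - 1) * c := by
      rw [Fintype.card_fin]
      conv_lhs => rw [show d = (d - 1) + 1 by omega]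
      rw [pow_succ]
    rw [hcd]
    have hkey : c * (1 + k / c * r ^ 2) = G := by
      rw [hk, hD, hc]
      field_simp
      ring
    rw [mul_assoc, hkey]
  refine ⟨hgF.differentiableAt, ?_, ?_⟩
  · rw [hfd, hdet, hderiv]; ring
  · rw [hfd, hdet]
    have h1 : (s ^ ((1:ℝ)/d)) ^ (d - 1 : ℕ) = s ^ (((d:ℝ) - 1) / d) := by
      rw [← Real.rpow_natCast (s ^ ((1:ℝ)/d)) (d - 1), ← Real.rpow_mul hspos.le]
      congr 1
      rw [Nat.cast_sub hd, Nat.cast_one]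
      field_simp
    have h2 : s ^ (((d:ℝ) - 1) / d) * s ^ ((1:ℝ)/d - 1) = 1 := by
      rw [← Real.rpow_add hspos]
      have : ((d:ℝ) - 1) / d + ((1:ℝ)/d - 1) = 0 := by field_simp; ring
      rw [this, Real.rpow_zero]
    have hrpow : (r : ℝ) ^ (d - 1 : ℕ) ≠ 0 := pow_ne_zero _ hr0.ne'
    rw [hc, hgtr, hG, div_pow, h1]
    calc s ^ (((d:ℝ) - 1) / d) / r ^ (d - 1) * (s ^ ((1:ℝ)/d - 1) * (r ^ (d - 1) * Ut r))
        = (s ^ (((d:ℝ) - 1) / d) * s ^ ((1:ℝ)/d - 1)) * (r ^ (d - 1) / r ^ (d - 1)) * Ut r := by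
          ring
      _ = Ut r := by rw [h2, div_self hrpow]; ring
end

section
/- Let V : ℝ^d → ℝ (d ≥ 3) be C², bounded with bounded first and second derivatives, and E > sup V. With u := (E-V)^{(d-2)/4} and R the scalar curvature of the Jacobi metric, the curvature integral over balls satisfies ∫_{B_r} R dm = 4 (d-1)/(d-2) ∫_{B_r} ‖∇u‖² dλ^d + O(r^{d-1}) as r → ∞, where dm = u^{2d/(d-2)} dλ^d is the Riemannian volume; in particular lim inf_{r→∞} r^{-d} ∫_{B_r} R dm ≥ 0. -/
/-!
With `K = 4(d-1)/(d-2)` one has `R dm = -K u Δu dλ` and `u Δu = ½ Δ(u²) - ‖∇u‖²`, so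
`∫_{B_r} R dm - K ∫_{B_r} ‖∇u‖² = -(K/2) ∑ᵢ ∫_{B_r} ∂ᵢ Hᵢ` with `Hᵢ = ∂ᵢ(u²)` bounded.
Instead of the divergence theorem on the ball, `∫_{B_r} ∂ᵢ Hᵢ` is read as the derivative at `t = 0`
of `t ↦ ∫_{B_r + t eᵢ} Hᵢ`; moving the ball by `t` changes it only on the annulus
`B_{r+|t|} \ B_{r-|t|}`, of volume `O(|t| r^{d-1})`, so that derivative is `O(r^{d-1})`.
The lower bound on the liminf then follows from `‖∇u‖² ≥ 0`.
-/

open Real Filter MeasureTheory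

/-- The Euclidean Laplacian of a scalar function on `ℝ^d`. -/
noncomputable def laplacian {d : ℕ} (f : EuclideanSpace ℝ (Fin d) → ℝ)
    (q : EuclideanSpace ℝ (Fin d)) : ℝ :=
  ∑ i : Fin d, fderiv ℝ (fun x => fderiv ℝ f x (EuclideanSpace.single i 1)) q
    (EuclideanSpace.single i 1)

open Metric Topology Module

theorem Continuous.integrableOn_ball {X : Type*} [MetricSpace X] [ProperSpace X]
    [MeasurableSpace X] [OpensMeasurableSpace X] {f : X → ℝ} (hf : Continuous f) (μ : Measure X)
    [IsFiniteMeasureOnCompacts μ] (x : X) (r : ℝ) : IntegrableOn f (ball x r) μ :=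
  (hf.continuousOn.integrableOn_compact (isCompact_closedBall x r)).mono_set ball_subset_closedBall

theorem abs_setIntegral_sub_setIntegral_le {α : Type*} [MeasurableSpace α] {μ : Measure α}
    {f : α → ℝ} {M : ℝ} (hf : ∀ x, |f x| ≤ M) {s t : Set α}
    (hs : MeasurableSet s) (ht : MeasurableSet t)
    (hfs : IntegrableOn f s μ) (hft : IntegrableOn f t μ) (hsμ : μ s < ⊤) (htμ : μ t < ⊤) :
    |∫ x in s, f x ∂μ - ∫ x in t, f x ∂μ| ≤ M * (μ.real (s \ t) + μ.real (t \ s)) := by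
  have hpiece : ∀ {a b : Set α}, μ a < ⊤ → |∫ x in a \ b, f x ∂μ| ≤ M * μ.real (a \ b) :=
    fun ha => by
      simpa only [Real.norm_eq_abs] using norm_setIntegral_le_of_norm_le_const
        ((measure_mono Set.sdiff_subset).trans_lt ha) fun x _ =>
          (Real.norm_eq_abs _).trans_le (hf x)
  have hs' := integral_inter_add_sdiff ht hfs
  have ht' := integral_inter_add_sdiff hs hft
  rw [Set.inter_comm] at ht'
  calc |∫ x in s, f x ∂μ - ∫ x in t, f x ∂μ|
      = |∫ x in s \ t, f x ∂μ - ∫ x in t \ s, f x ∂μ| := by rw [← hs', ← ht']; ring_nf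
    _ ≤ |∫ x in s \ t, f x ∂μ| + |∫ x in t \ s, f x ∂μ| := abs_sub _ _
    _ ≤ M * μ.real (s \ t) + M * μ.real (t \ s) := add_le_add (hpiece hsμ) (hpiece htμ)
    _ = _ := by ring

theorem setIntegral_ball_comp_add_right {G : Type*} [NormedAddCommGroup G] [MeasurableSpace G]
    [MeasurableAdd G] (μ : Measure G) [μ.IsAddRightInvariant] (H : G → ℝ) (w : G) (r : ℝ) :
    ∫ x in ball (0 : G) r, H (x + w) ∂μ = ∫ x in ball w r, H x ∂μ := by
  have hpre : (· + w) ⁻¹' ball w r = ball (0 : G) r := by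
    ext x; simp [dist_eq_norm]
  rw [← hpre]
  exact (measurePreserving_add_right μ w).setIntegral_preimage_emb
    (measurableEmbedding_addRight w) H _

section FiniteDimensional

variable {E : Type*} [NormedAddCommGroup E] [NormedSpace ℝ E] [FiniteDimensional ℝ E]
  [MeasurableSpace E] [BorelSpace E]

theorem measureReal_ball_sdiff_ball_le (μ : Measure E) [μ.IsAddHaarMeasure] [Nontrivial E]
    {r s : ℝ} (hs : 0 ≤ s) (hsr : s ≤ r) :
    μ.real (ball (0 : E) (r + s) \ ball 0 (r - s)) ≤
      2 * s * finrank ℝ E * (r + s) ^ (finrank ℝ E - 1) * μ.real (ball 0 1) := by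
  have hpow := abs_pow_sub_pow_le (r + s) (r - s) (finrank ℝ E)
  rw [abs_of_nonneg (sub_nonneg.2 (pow_le_pow_left₀ (by linarith) (by linarith) _)),
    show r + s - (r - s) = 2 * s by ring, abs_of_nonneg (by linarith : 0 ≤ 2 * s),
    max_eq_left (by rw [abs_of_nonneg (by linarith), abs_of_nonneg (by linarith)]; linarith),
    abs_of_nonneg (by linarith)] at hpow
  have hball : ∀ ρ : ℝ, 0 ≤ ρ → μ.real (ball (0 : E) ρ) = ρ ^ finrank ℝ E * μ.real (ball 0 1) :=
    fun ρ hρ => by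
      rw [measureReal_def, Measure.addHaar_ball _ _ hρ, ENNReal.toReal_mul,
        ENNReal.toReal_ofReal (pow_nonneg hρ _), measureReal_def]
  rw [measureReal_sdiff (ball_subset_ball (by linarith)) measurableSet_ball,
    hball (r + s) (by linarith), hball (r - s) (by linarith), ← sub_mul]
  exact mul_le_mul_of_nonneg_right hpow measureReal_nonneg

theorem hasDerivAt_setIntegral_comp_add_smul (μ : Measure E) [IsFiniteMeasureOnCompacts μ]
    {H : E → ℝ} (hH : ContDiff ℝ 1 H) (v : E)
    {s : Set E} (hs : Bornology.IsBounded s) (hsm : MeasurableSet s) :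
    HasDerivAt (fun t : ℝ => ∫ x in s, H (x + t • v) ∂μ) (∫ x in s, fderiv ℝ H x v ∂μ) 0 := by
  have hsμ : μ s < ⊤ := hs.measure_lt_top
  have : IsFiniteMeasure (μ.restrict s) := isFiniteMeasure_restrict.2 hsμ.ne
  obtain ⟨R, hR⟩ := hs.subset_closedBall 0
  have hcont : Continuous fun y => fderiv ℝ H y v :=
    (hH.continuous_fderiv one_ne_zero).clm_apply continuous_const
  obtain ⟨C, hC⟩ := (isCompact_closedBall (0 : E) (R + ‖v‖)).exists_bound_of_continuousOn
    hcont.continuousOn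
  have hderiv : ∀ x (t : ℝ),
      HasDerivAt (fun t : ℝ => H (x + t • v)) (fderiv ℝ H (x + t • v) v) t := fun x t => by
    have := ((hH.differentiable one_ne_zero) (x + t • v)).hasFDerivAt.comp_hasDerivAt t
      (((hasDerivAt_id t).smul_const v).const_add x)
    simp only [id, one_smul] at this
    exact this
  have hmem : ∀ x ∈ s, ∀ t ∈ ball (0 : ℝ) 1, x + t • v ∈ closedBall (0 : E) (R + ‖v‖) := by
    intro x hx t ht
    rw [mem_ball_zero_iff, Real.norm_eq_abs] at ht
    rw [mem_closedBall_zero_iff]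
    calc ‖x + t • v‖ ≤ ‖x‖ + |t| * ‖v‖ := by
          simpa [norm_smul] using norm_add_le x (t • v)
      _ ≤ R + 1 * ‖v‖ := by
          gcongr
          simpa using hR hx
      _ = R + ‖v‖ := by ring
  have key := hasDerivAt_integral_of_dominated_loc_of_deriv_le (μ := μ.restrict s)
    (F := fun t x => H (x + t • v)) (F' := fun t x => fderiv ℝ H (x + t • v) v)
    (bound := fun _ => C) (ball_mem_nhds (0 : ℝ) one_pos)
    (Eventually.of_forall fun t =>
      (hH.continuous.comp (continuous_add_const _)).aestronglyMeasurable)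
    (((hH.continuous.comp (continuous_add_const _)).continuousOn.integrableOn_compact
      (isCompact_closedBall 0 R)).mono_set hR) ?_ ?_ (integrable_const C)
    (Eventually.of_forall fun x t _ => hderiv x t)
  · simpa using key.2
  · exact (hcont.comp (continuous_add_const _)).aestronglyMeasurable
  · filter_upwards [ae_restrict_mem hsm] with x hx t ht
    exact hC _ (hmem x hx t ht)

variable (μ : Measure E) [μ.IsAddHaarMeasure] [Nontrivial E]

theorem abs_setIntegral_ball_sub_setIntegral_ball_le {H : E → ℝ} (hH : Continuous H) {M : ℝ}
    (hM : ∀ x, |H x| ≤ M) {w : E} {r : ℝ} (hwr : ‖w‖ ≤ r) :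
    |∫ x in ball w r, H x ∂μ - ∫ x in ball 0 r, H x ∂μ| ≤
      4 * M * ‖w‖ * finrank ℝ E * (2 * r) ^ (finrank ℝ E - 1) * μ.real (ball 0 1) := by
  have hM0 : 0 ≤ M := (abs_nonneg _).trans (hM 0)
  set A := ball (0 : E) (r + ‖w‖) \ ball 0 (r - ‖w‖)
  have hAfin : μ A ≠ ⊤ := ((measure_mono Set.sdiff_subset).trans_lt measure_ball_lt_top).ne
  have hsub₁ : ball w r \ ball 0 r ⊆ A := by
    intro x
    simp only [A, Set.mem_sdiff, mem_ball, dist_eq_norm, sub_zero, not_lt, and_imp]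
    intro hxw hx
    constructor <;> linarith [norm_le_norm_add_norm_sub' x w, norm_nonneg w]
  have hsub₂ : ball 0 r \ ball w r ⊆ A := by
    intro x
    simp only [A, Set.mem_sdiff, mem_ball, dist_eq_norm, sub_zero, not_lt, and_imp]
    intro hx hxw
    constructor <;> linarith [norm_sub_le x w, norm_nonneg w]
  calc |∫ x in ball w r, H x ∂μ - ∫ x in ball 0 r, H x ∂μ|
      ≤ M * (μ.real (ball w r \ ball 0 r) + μ.real (ball 0 r \ ball w r)) :=
        abs_setIntegral_sub_setIntegral_le hM measurableSet_ball measurableSet_ball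
          (hH.integrableOn_ball μ w r) (hH.integrableOn_ball μ 0 r) measure_ball_lt_top
          measure_ball_lt_top
    _ ≤ M * (2 * μ.real A) := by
        gcongr
        linarith [measureReal_mono hsub₁ hAfin, measureReal_mono hsub₂ hAfin]
    _ ≤ M * (2 * (2 * ‖w‖ * finrank ℝ E * (r + ‖w‖) ^ (finrank ℝ E - 1) * μ.real (ball 0 1))) := by
        gcongr
        exact measureReal_ball_sdiff_ball_le μ (norm_nonneg w) hwr
    _ ≤ M * (2 * (2 * ‖w‖ * finrank ℝ E * (2 * r) ^ (finrank ℝ E - 1) * μ.real (ball 0 1))) := by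
        gcongr <;> linarith [norm_nonneg w]
    _ = _ := by ring

theorem abs_setIntegral_ball_fderiv_le {H : E → ℝ} (hH : ContDiff ℝ 1 H) {M : ℝ}
    (hM : ∀ x, |H x| ≤ M) (v : E) {r : ℝ} (hr : 0 < r) :
    |∫ x in ball 0 r, fderiv ℝ H x v ∂μ| ≤
      4 * M * ‖v‖ * finrank ℝ E * (2 * r) ^ (finrank ℝ E - 1) * μ.real (ball 0 1) := by
  have hM0 : 0 ≤ M := (abs_nonneg _).trans (hM 0)
  have hsmall : ∀ᶠ t : ℝ in 𝓝 0, ‖t • v‖ ≤ r := by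
    have : Tendsto (fun t : ℝ => ‖t • v‖) (𝓝 0) (𝓝 0) :=
      (continuous_id.smul continuous_const).norm.tendsto' 0 0 (by simp)
    exact this.eventually (eventually_le_nhds hr)
  refine (hasDerivAt_setIntegral_comp_add_smul μ hH v isBounded_ball measurableSet_ball).le_of_lip'
    (by positivity) ?_
  filter_upwards [hsmall] with t ht
  have h := abs_setIntegral_ball_sub_setIntegral_ball_le μ hH.continuous hM ht
  rw [← setIntegral_ball_comp_add_right] at h
  simp only [zero_smul, add_zero, Real.norm_eq_abs, sub_zero]
  calc |∫ x in ball 0 r, H (x + t • v) ∂μ - ∫ x in ball 0 r, H x ∂μ|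
      ≤ 4 * M * ‖t • v‖ * finrank ℝ E * (2 * r) ^ (finrank ℝ E - 1) * μ.real (ball 0 1) := h
    _ = _ := by rw [norm_smul, Real.norm_eq_abs]; ring

end FiniteDimensional

section Euclidean

variable {d : ℕ} {f : EuclideanSpace ℝ (Fin d) → ℝ}

theorem norm_gradient_sq_eq_sum (x : EuclideanSpace ℝ (Fin d)) :
    ‖gradient f x‖ ^ 2 = ∑ i, fderiv ℝ f x (EuclideanSpace.single i 1) ^ 2 := by
  rw [gradient, (InnerProductSpace.toDual ℝ _).symm.norm_map]
  simpa using (EuclideanSpace.basisFun (Fin d) ℝ).norm_dual (fderiv ℝ f x)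

theorem ContDiff.fderiv_apply_const {E : Type*} [NormedAddCommGroup E] [NormedSpace ℝ E]
    {g : E → ℝ} (hg : ContDiff ℝ 2 g) (v : E) : ContDiff ℝ 1 fun x => fderiv ℝ g x v :=
  (hg.fderiv_right (m := 1) (by norm_num)).clm_apply contDiff_const

theorem continuous_laplacian (hf : ContDiff ℝ 2 f) : Continuous (laplacian f) :=
  continuous_finsetSum _ fun _ _ =>
    ((hf.fderiv_apply_const _).continuous_fderiv one_ne_zero).clm_apply continuous_const

theorem laplacian_sq (hf : ContDiff ℝ 2 f) (q : EuclideanSpace ℝ (Fin d)) :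
    laplacian (fun x => f x ^ 2) q = 2 * (f q * laplacian f q + ‖gradient f q‖ ^ 2) := by
  have hdiff := hf.differentiable two_ne_zero
  have hpartial : ∀ v, (fun x => fderiv ℝ (fun y => f y ^ 2) x v)
      = fun x => 2 * f x * fderiv ℝ f x v := fun v => by
    funext x
    rw [((hdiff x).hasFDerivAt.pow 2).fderiv]
    simp
  have hsecond : ∀ v, fderiv ℝ (fun x => 2 * f x * fderiv ℝ f x v) q v
      = 2 * f q * fderiv ℝ (fun x => fderiv ℝ f x v) q v + 2 * fderiv ℝ f q v ^ 2 := fun v => by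
    have h : HasFDerivAt (fun x => 2 * f x * fderiv ℝ f x v) _ q :=
      ((hdiff q).hasFDerivAt.const_mul 2).mul
        ((hf.fderiv_apply_const v).differentiable one_ne_zero q).hasFDerivAt
    rw [h.fderiv]
    simp only [add_apply, smul_apply, smul_eq_mul]
    ring
  simp only [laplacian, hpartial, hsecond, norm_gradient_sq_eq_sum, Finset.sum_add_distrib,
    ← Finset.mul_sum]
  ring

theorem exists_abs_integral_laplacian_ball_le {G : EuclideanSpace ℝ (Fin d) → ℝ}
    (hG : ContDiff ℝ 2 G) {M : ℝ} (hM : ∀ x, ‖fderiv ℝ G x‖ ≤ M) :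
    ∃ C, ∀ r : ℝ, 0 < r → |∫ x in ball 0 r, laplacian G x| ≤ C * r ^ ((d : ℝ) - 1) := by
  rcases Nat.eq_zero_or_pos d with rfl | hd
  · exact ⟨0, fun r _ => by simp [laplacian]⟩
  have : Nonempty (Fin d) := ⟨⟨0, hd⟩⟩
  refine ⟨d * (4 * M * d * 2 ^ (d - 1) * volume.real (ball (0 : EuclideanSpace ℝ (Fin d)) 1)),
    fun r hr => ?_⟩
  have hpartial : ∀ i : Fin d, |∫ x in ball 0 r,
      fderiv ℝ (fun y => fderiv ℝ G y (EuclideanSpace.single i 1)) x (EuclideanSpace.single i 1)|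
      ≤ 4 * M * d * (2 * r) ^ (d - 1) * volume.real (ball (0 : EuclideanSpace ℝ (Fin d)) 1) := by
    intro i
    have h := abs_setIntegral_ball_fderiv_le volume (hG.fderiv_apply_const _)
      (fun x => by simpa using (fderiv ℝ G x).le_of_opNorm_le (hM x) (EuclideanSpace.single i 1))
      (EuclideanSpace.single i 1) hr
    simpa [finrank_euclideanSpace_fin] using h
  have hint : ∀ i : Fin d, IntegrableOn
      (fun x => fderiv ℝ (fun y => fderiv ℝ G y (EuclideanSpace.single i 1)) x
        (EuclideanSpace.single i 1)) (ball 0 r) :=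
    fun i => (((hG.fderiv_apply_const _).continuous_fderiv one_ne_zero).clm_apply
      continuous_const).integrableOn_ball _ _ _
  have hrpow : (2 * r) ^ (d - 1) = 2 ^ (d - 1) * r ^ ((d : ℝ) - 1) := by
    rw [mul_pow, ← Real.rpow_natCast r, Nat.cast_sub hd, Nat.cast_one]
  calc |∫ x in ball 0 r, laplacian G x|
      = |∑ i, ∫ x in ball 0 r, fderiv ℝ (fun y => fderiv ℝ G y (EuclideanSpace.single i 1)) x
          (EuclideanSpace.single i 1)| := by
        unfold laplacian
        rw [integral_finsetSum _ fun i _ => hint i]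
    _ ≤ ∑ _i : Fin d, 4 * M * d * (2 * r) ^ (d - 1) *
          volume.real (ball (0 : EuclideanSpace ℝ (Fin d)) 1) :=
        (Finset.abs_sum_le_sum_abs _ _).trans (Finset.sum_le_sum fun i _ => hpartial i)
    _ = _ := by rw [Finset.sum_const, Finset.card_univ, Fintype.card_fin, nsmul_eq_mul, hrpow]; ring

end Euclidean

theorem Real.liminf_nonneg_of_tendsto_zero_of_le {α : Type*} {l : Filter α} [l.NeBot]
    {f g : α → ℝ} (hg : Tendsto g l (𝓝 0)) (hgf : ∀ᶠ x in l, g x ≤ f x) : 0 ≤ liminf f l := by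
  by_cases hf : IsCoboundedUnder (· ≥ ·) l f
  · rw [← hg.liminf_eq]
    exact liminf_le_liminf hgf hg.isBoundedUnder_ge hf
  · -- here `f → +∞`, and `liminf` takes the junk value `0`
    rw [Real.liminf_of_not_isCoboundedUnder hf]

theorem liminf_rpow_neg_mul_nonneg {f g : ℝ → ℝ} {s C : ℝ} (hg : ∀ r, 0 ≤ g r)
    (hfg : ∀ r, 1 ≤ r → |f r - g r| ≤ C * r ^ (s - 1)) :
    0 ≤ liminf (fun r => r ^ (-s) * f r) atTop := by
  refine Real.liminf_nonneg_of_tendsto_zero_of_le (g := fun r => -C * r⁻¹)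
    (by simpa using tendsto_inv_atTop_zero.const_mul (-C)) ?_
  filter_upwards [eventually_ge_atTop 1] with r hr
  have hr0 : 0 < r := one_pos.trans_le hr
  have hf : -(C * r ^ (s - 1)) ≤ f r := by linarith [(abs_le.1 (hfg r hr)).1, hg r]
  calc -C * r⁻¹ = r ^ (-s) * -(C * r ^ (s - 1)) := by
        rw [mul_neg, ← mul_assoc, mul_comm _ C, mul_assoc, ← Real.rpow_add hr0,
          show -s + (s - 1) = -1 by ring, Real.rpow_neg_one, neg_mul]
    _ ≤ r ^ (-s) * f r := by gcongr

theorem exists_norm_fderiv_rpow_le {E : Type*} [NormedAddCommGroup E] [NormedSpace ℝ E]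
    {W : E → ℝ} (hW : Differentiable ℝ W) {a b c : ℝ} (ha : 0 < a) (haW : ∀ x, a ≤ W x)
    (hWb : ∀ x, W x ≤ b) (hc : ∀ x, ‖fderiv ℝ W x‖ ≤ c) (s : ℝ) :
    ∃ C, ∀ x, ‖fderiv ℝ (fun y => W y ^ s) x‖ ≤ C := by
  obtain ⟨B, hB⟩ := (isCompact_Icc (a := a) (b := b)).exists_bound_of_continuousOn
    (f := fun w => s * w ^ (s - 1)) (continuousOn_const.mul
      (continuousOn_id.rpow_const fun w hw => Or.inl (ha.trans_le hw.1).ne'))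
  refine ⟨B * c, fun x => ?_⟩
  have hx : W x ∈ Set.Icc a b := ⟨haW x, hWb x⟩
  rw [((hW x).hasFDerivAt.rpow_const (Or.inl (ha.trans_le (haW x)).ne')).fderiv, norm_smul]
  exact mul_le_mul (hB _ hx) (hc x) (norm_nonneg _) ((norm_nonneg _).trans (hB _ hx))

theorem conformalCurvature_mul_volumeDensity {d : ℕ} (hd : (d : ℝ) ≠ 2)
    {u : EuclideanSpace ℝ (Fin d) → ℝ} (hu : ContDiff ℝ 2 u) {q : EuclideanSpace ℝ (Fin d)} (hq : 0 < u q) :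
    -4 * ((d : ℝ) - 1) / ((d : ℝ) - 2) * u q ^ (-(((d : ℝ) + 2) / ((d : ℝ) - 2))) * laplacian u q
        * u q ^ (2 * (d : ℝ) / ((d : ℝ) - 2))
      = 4 * ((d : ℝ) - 1) / ((d : ℝ) - 2) * ‖gradient u q‖ ^ 2
        - 4 * ((d : ℝ) - 1) / ((d : ℝ) - 2) / 2 * laplacian (fun x => u x ^ 2) q := by
  have hd' : (d : ℝ) - 2 ≠ 0 := sub_ne_zero.2 hd
  have hexp : u q ^ (-(((d : ℝ) + 2) / ((d : ℝ) - 2))) * u q ^ (2 * (d : ℝ) / ((d : ℝ) - 2))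
      = u q := by
    rw [← Real.rpow_add hq, show -(((d : ℝ) + 2) / ((d : ℝ) - 2)) + 2 * (d : ℝ) / ((d : ℝ) - 2)
      = 1 by field_simp; ring, Real.rpow_one]
  rw [laplacian_sq hu]
  linear_combination (-4 * ((d : ℝ) - 1) / ((d : ℝ) - 2) * laplacian u q) * hexp

theorem exists_abs_integral_conformalCurvature_sub_le {d : ℕ} (hd : (d : ℝ) ≠ 2)
    {u R : EuclideanSpace ℝ (Fin d) → ℝ} (hu : ContDiff ℝ 2 u) (hpos : ∀ q, 0 < u q) {M : ℝ}
    (hM : ∀ q, ‖fderiv ℝ (fun x => u x ^ 2) q‖ ≤ M)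
    (hR : ∀ q, R q = -4 * ((d : ℝ) - 1) / ((d : ℝ) - 2)
      * u q ^ (-(((d : ℝ) + 2) / ((d : ℝ) - 2))) * laplacian u q) :
    ∃ C : ℝ, ∀ r : ℝ, 1 ≤ r →
      |(∫ q in ball 0 r, R q * u q ^ (2 * (d : ℝ) / ((d : ℝ) - 2)))
        - 4 * ((d : ℝ) - 1) / ((d : ℝ) - 2) * ∫ q in ball 0 r, ‖gradient u q‖ ^ 2|
        ≤ C * r ^ ((d : ℝ) - 1) := by
  set K := 4 * ((d : ℝ) - 1) / ((d : ℝ) - 2)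
  obtain ⟨C, hC⟩ := exists_abs_integral_laplacian_ball_le (hu.pow 2) hM
  have hgrad : Continuous fun q => ‖gradient u q‖ ^ 2 :=
    ((InnerProductSpace.toDual ℝ _).symm.continuous.comp
      (hu.continuous_fderiv two_ne_zero)).norm.pow 2
  refine ⟨|K / 2| * C, fun r hr => ?_⟩
  rw [setIntegral_congr_fun measurableSet_ball fun q _ => by
      rw [hR, conformalCurvature_mul_volumeDensity hd hu (hpos q)],
    integral_sub ((hgrad.integrableOn_ball _ _ _).const_mul K)
      (((continuous_laplacian (hu.pow 2)).integrableOn_ball _ _ _).const_mul _),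
    integral_const_mul, integral_const_mul, sub_sub_cancel_left, abs_neg, abs_mul, mul_assoc]
  exact mul_le_mul_of_nonneg_left (hC r (by linarith)) (abs_nonneg _)

/-- For `d ≥ 3`, bounded `V` with bounded derivatives and
`E > sup V`, the curvature integral of the Jacobi metric over balls satisfies
`∫_{B_r} R dm = 4 (d-1)/(d-2) ∫_{B_r} ‖∇u‖² dλ + O(r^{d-1})`, where
`dm = u^{2d/(d-2)} dλ`; in particular `liminf_{r→∞} r^{-d} ∫_{B_r} R dm ≥ 0`. -/
theorem stmt12 {d : ℕ} (hd : 3 ≤ d)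
    (V : EuclideanSpace ℝ (Fin d) → ℝ) (hV : ContDiff ℝ 2 V)
    (c : ℝ)
    (hb : ∀ q, |V q| + ‖fderiv ℝ V q‖ + ‖fderiv ℝ (fderiv ℝ V) q‖ ≤ c)
    (E : ℝ) (hE : sSup (Set.range V) < E)
    (u R : EuclideanSpace ℝ (Fin d) → ℝ)
    (hu : ∀ q, u q = (E - V q) ^ (((d : ℝ) - 2) / 4))
    (hR : ∀ q, R q = -4 * ((d : ℝ) - 1) / ((d : ℝ) - 2)
      * (u q) ^ (-(((d : ℝ) + 2) / ((d : ℝ) - 2))) * laplacian u q) :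
    (∃ C : ℝ, ∀ r : ℝ, 1 ≤ r →
      |(∫ q in Metric.ball (0 : EuclideanSpace ℝ (Fin d)) r,
          R q * (u q) ^ (2 * (d : ℝ) / ((d : ℝ) - 2)))
        - 4 * ((d : ℝ) - 1) / ((d : ℝ) - 2) *
          ∫ q in Metric.ball (0 : EuclideanSpace ℝ (Fin d)) r, ‖gradient u q‖^2|
        ≤ C * r ^ ((d : ℝ) - 1)) ∧
    0 ≤ Filter.liminf (fun r : ℝ =>
      r ^ (-(d : ℝ)) * ∫ q in Metric.ball (0 : EuclideanSpace ℝ (Fin d)) r,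
        R q * (u q) ^ (2 * (d : ℝ) / ((d : ℝ) - 2))) Filter.atTop := by
  have hd3 : (3 : ℝ) ≤ d := by exact_mod_cast hd
  have hVb : ∀ q, |V q| ≤ c := fun q => by
    linarith [hb q, norm_nonneg (fderiv ℝ V q), norm_nonneg (fderiv ℝ (fderiv ℝ V) q)]
  have hWd : ∀ q, ‖fderiv ℝ (fun x => E - V x) q‖ ≤ c := fun q => by
    rw [fderiv_const_sub, norm_neg]
    linarith [hb q, abs_nonneg (V q), norm_nonneg (fderiv ℝ (fderiv ℝ V) q)]
  have hVsup : ∀ q, V q ≤ sSup (Set.range V) := fun q =>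
    le_csSup ⟨c, by rintro _ ⟨x, rfl⟩; exact (abs_le.1 (hVb x)).2⟩ (Set.mem_range_self q)
  have hW : ContDiff ℝ 2 fun x => E - V x := contDiff_const.sub hV
  have hWpos : ∀ q, 0 < E - V q := fun q => by linarith [hVsup q]
  have hu2 : ContDiff ℝ 2 u := funext hu ▸ hW.rpow_const_of_ne fun q => (hWpos q).ne'
  have hsq : (fun x => u x ^ 2) = fun x => (E - V x) ^ (((d : ℝ) - 2) / 4 * 2) := by
    funext x; rw [hu, ← Real.rpow_mul_natCast (hWpos x).le]; norm_num
  obtain ⟨M, hM⟩ := exists_norm_fderiv_rpow_le (hW.differentiable two_ne_zero)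
    (a := E - sSup (Set.range V)) (b := E + c) (sub_pos.2 hE) (fun q => by linarith [hVsup q])
    (fun q => by linarith [(abs_le.1 (hVb q)).1]) hWd (((d : ℝ) - 2) / 4 * 2)
  obtain ⟨C, hC⟩ := exists_abs_integral_conformalCurvature_sub_le (by linarith) hu2
    (fun q => hu q ▸ Real.rpow_pos_of_pos (hWpos q) _) (hsq ▸ hM) hR
  have hK : 0 ≤ 4 * ((d : ℝ) - 1) / ((d : ℝ) - 2) := div_nonneg (by linarith) (by linarith)
  exact ⟨⟨C, hC⟩, liminf_rpow_neg_mul_nonneg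
    (fun r => mul_nonneg hK (integral_nonneg fun q => by positivity)) hC⟩
end

section
/- Let Φ be a measurable flow on a measure space (Σ, μ) preserving μ, and v : Σ → ℝ^d a measurable Φ-invariant function (v∘Φᵗ = v). Suppose there is a measurable involution R : Σ → Σ with μ∘R = μ, R∘Φᵗ = Φ⁻ᵗ∘R, and v∘R = -v. If μ({x : v(x) ≠ 0}) > 0, then there exists a unit vector s ∈ S^{d-1} such that B_s := {x : ⟨v(x), s⟩ > 0} and B_{-s} are disjoint Φ-invariant sets of equal positive measure; in particular Φ is not ergodic. -/
open Real Filter MeasureTheory RealInnerProductSpace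

/-!
The set `{v ≠ 0}` is covered by the finitely many half-spaces `{0 < ⟪v, ±bᵢ⟫}` of an orthonormal
basis, so one of them, `B_s`, has positive measure. It is invariant because `v` is, and the
reversal `R` maps `B_s` onto `B_{-s}` (as `v ∘ R = -v`) while preserving `μ`, so `B_s` and its
complement both carry positive measure.
-/

section HalfSpaces

variable {E : Type*} [NormedAddCommGroup E] [InnerProductSpace ℝ E]

lemma OrthonormalBasis.exists_inner_ne_zero {ι : Type*} [Fintype ι]
    (b : OrthonormalBasis ι ℝ E) {w : E} (hw : w ≠ 0) : ∃ i, ⟪b i, w⟫ ≠ 0 := by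
  by_contra! h
  exact hw (by simpa [h] using (b.sum_repr' w).symm)

lemma OrthonormalBasis.exists_mem_inner_pos {ι : Type*} [Fintype ι]
    (b : OrthonormalBasis ι ℝ E) {w : E} (hw : w ≠ 0) :
    ∃ s ∈ Set.range b ∪ Set.range (-⇑b), 0 < ⟪w, s⟫ := by
  obtain ⟨i, hi⟩ := b.exists_inner_ne_zero hw
  rw [real_inner_comm] at hi
  rcases hi.lt_or_gt with hneg | hpos
  · exact ⟨-b i, Or.inr ⟨i, rfl⟩, by simpa [inner_neg_right] using hneg⟩
  · exact ⟨b i, Or.inl ⟨i, rfl⟩, hpos⟩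

lemma OrthonormalBasis.norm_eq_one_of_mem {ι : Type*} [Fintype ι]
    (b : OrthonormalBasis ι ℝ E) {s : E} (hs : s ∈ Set.range b ∪ Set.range (-⇑b)) : ‖s‖ = 1 := by
  rcases hs with ⟨i, rfl⟩ | ⟨i, rfl⟩
  · exact b.orthonormal.1 i
  · simp

variable {X : Type*} [MeasurableSpace X] {μ : Measure X} {v : X → E}

lemma exists_mem_measure_inner_pos {D : Set E} (hD : D.Countable)
    (hD_cover : ∀ w ≠ 0, ∃ s ∈ D, 0 < ⟪w, s⟫) (hpos : 0 < μ {x | v x ≠ 0}) :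
    ∃ s ∈ D, 0 < μ {x | 0 < ⟪v x, s⟫} := by
  by_contra! hnull
  have hsub : {x | v x ≠ 0} ⊆ ⋃ s ∈ D, {x | 0 < ⟪v x, s⟫} := fun x hx => by
    simpa using hD_cover (v x) hx
  refine hpos.ne' (measure_mono_null hsub ?_)
  exact (measure_biUnion_null_iff hD).2 fun s hs => nonpos_iff_eq_zero.1 (hnull s hs)

lemma exists_norm_eq_one_measure_inner_pos [FiniteDimensional ℝ E]
    (hpos : 0 < μ {x | v x ≠ 0}) : ∃ s : E, ‖s‖ = 1 ∧ 0 < μ {x | 0 < ⟪v x, s⟫} := by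
  let b := stdOrthonormalBasis ℝ E
  have hD : (Set.range b ∪ Set.range (-⇑b)).Countable :=
    (Set.countable_range _).union (Set.countable_range _)
  obtain ⟨s, hs, hμs⟩ := exists_mem_measure_inner_pos hD (fun _ => b.exists_mem_inner_pos) hpos
  exact ⟨s, b.norm_eq_one_of_mem hs, hμs⟩

lemma measure_inner_pos_eq_neg [MeasurableSpace E] [OpensMeasurableSpace E]
    (hv : Measurable v) {R : X → X} (hRμ : MeasurePreserving R μ μ)
    (hvR : ∀ x, v (R x) = -v x) (s : E) :
    μ {x | 0 < ⟪v x, s⟫} = μ {x | 0 < ⟪v x, -s⟫} := by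
  have hmeas : MeasurableSet {x | 0 < ⟪v x, -s⟫} :=
    measurableSet_lt measurable_const ((continuous_id.inner continuous_const).measurable.comp hv)
  have hpre : R ⁻¹' {x | 0 < ⟪v x, -s⟫} = {x | 0 < ⟪v x, s⟫} := by
    ext x
    simp [hvR, inner_neg_left, inner_neg_right]
  rw [← hpre, hRμ.measure_preimage hmeas.nullMeasurableSet]

end HalfSpaces

lemma not_forall_invariant_null_or_compl_null {X ι : Type*} [MeasurableSpace X] {μ : Measure X}
    (Φ : ι → X → X) {A B : Set X} (hA : MeasurableSet A) (hA_inv : ∀ t, Φ t ⁻¹' A = A)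
    (hAB : Disjoint A B) (hμA : 0 < μ A) (hμB : 0 < μ B) :
    ¬ ∀ A : Set X, MeasurableSet A → (∀ t, Φ t ⁻¹' A = A) → μ A = 0 ∨ μ Aᶜ = 0 := by
  intro hergodic
  rcases hergodic A hA hA_inv with hA0 | hAc0
  · exact hμA.ne' hA0
  · exact hμB.ne' (measure_mono_null hAB.subset_compl_left hAc0)

theorem stmt17_general {d : ℕ} {X : Type*} [MeasurableSpace X]
    (μ : Measure X)
    (Φ : ℝ → X → X)
    (v : X → EuclideanSpace ℝ (Fin d)) (hv : Measurable v)
    (hvinv : ∀ t x, v (Φ t x) = v x)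
    (R : X → X)
    (hRμ : MeasurePreserving R μ μ)
    (hvR : ∀ x, v (R x) = -v x)
    (hpos : 0 < μ {x | v x ≠ 0}) :
    ∃ s : EuclideanSpace ℝ (Fin d), ‖s‖ = 1 ∧
      Disjoint {x | 0 < ⟪v x, s⟫} {x | 0 < ⟪v x, -s⟫} ∧
      (∀ t, Φ t ⁻¹' {x | 0 < ⟪v x, s⟫} = {x | 0 < ⟪v x, s⟫}) ∧
      (∀ t, Φ t ⁻¹' {x | 0 < ⟪v x, -s⟫} = {x | 0 < ⟪v x, -s⟫}) ∧
      μ {x | 0 < ⟪v x, s⟫} = μ {x | 0 < ⟪v x, -s⟫} ∧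
      0 < μ {x | 0 < ⟪v x, s⟫} ∧
      ¬ (∀ A : Set X, MeasurableSet A → (∀ t, Φ t ⁻¹' A = A) →
          μ A = 0 ∨ μ Aᶜ = 0) := by
  obtain ⟨s, hs, hμs⟩ := exists_norm_eq_one_measure_inner_pos hpos
  have hdisj : Disjoint {x | 0 < ⟪v x, s⟫} {x | 0 < ⟪v x, -s⟫} :=
    Set.disjoint_left.2 fun x (hx : 0 < ⟪v x, s⟫) (hx' : 0 < ⟪v x, -s⟫) => by
      rw [inner_neg_right] at hx'
      linarith
  have hinv : ∀ u t, Φ t ⁻¹' {x | 0 < ⟪v x, u⟫} = {x | 0 < ⟪v x, u⟫} := fun u t => by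
    ext x
    simp [hvinv]
  have heq := measure_inner_pos_eq_neg hv hRμ hvR s
  have hmeas : MeasurableSet {x | 0 < ⟪v x, s⟫} :=
    measurableSet_lt measurable_const (hv.inner measurable_const)
  exact ⟨s, hs, hdisj, hinv s, hinv (-s), heq, hμs,
    not_forall_invariant_null_or_compl_null Φ hmeas (hinv s) hdisj hμs (heq ▸ hμs)⟩

/-- A flow-invariant "asymptotic velocity" `v` which is odd under a
time-reversing measure-preserving involution `R` and nonzero on a set of positive
measure yields disjoint invariant sets `B_s`, `B_{-s}` of equal positive measure;
in particular the flow is not ergodic. -/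
theorem stmt17 {d : ℕ} {X : Type*} [MeasurableSpace X]
    (μ : Measure X)
    (Φ : ℝ → X → X)
    (hΦ : ∀ t, MeasurePreserving (Φ t) μ μ)
    (hΦgrp : ∀ s t x, Φ s (Φ t x) = Φ (s + t) x)
    (hΦ0 : ∀ x, Φ 0 x = x)
    (v : X → EuclideanSpace ℝ (Fin d)) (hv : Measurable v)
    (hvinv : ∀ t x, v (Φ t x) = v x)
    (R : X → X) (hR : Function.Involutive R)
    (hRμ : MeasurePreserving R μ μ)
    (hRΦ : ∀ t x, R (Φ t x) = Φ (-t) (R x))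
    (hvR : ∀ x, v (R x) = -v x)
    (hpos : 0 < μ {x | v x ≠ 0}) :
    ∃ s : EuclideanSpace ℝ (Fin d), ‖s‖ = 1 ∧
      Disjoint {x | 0 < ⟪v x, s⟫} {x | 0 < ⟪v x, -s⟫} ∧
      (∀ t, Φ t ⁻¹' {x | 0 < ⟪v x, s⟫} = {x | 0 < ⟪v x, s⟫}) ∧
      (∀ t, Φ t ⁻¹' {x | 0 < ⟪v x, -s⟫} = {x | 0 < ⟪v x, -s⟫}) ∧
      μ {x | 0 < ⟪v x, s⟫} = μ {x | 0 < ⟪v x, -s⟫} ∧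
      0 < μ {x | 0 < ⟪v x, s⟫} ∧
      ¬ (∀ A : Set X, MeasurableSet A → (∀ t, Φ t ⁻¹' A = A) →
          μ A = 0 ∨ μ Aᶜ = 0) :=
  stmt17_general μ Φ v hv hvinv R hRμ hvR hpos
end

section
/- Let ℒ = ℤ^d, J a finite set, Ω = J^ℒ, β a shift-invariant probability measure on Ω with β({ω₀}) = 0 for the constant configuration ω₀ ≡ 0. For q ∈ ℝ^d, angle φ ∈ (0, π], and unit vector x, let Δ_q^φ(x) := {ℓ ∈ ℒ : angle between x and ℓ - q is < φ} be the lattice points in the Euclidean cone. Then β-almost surely there is no triple (q, φ, x) with ω(ℓ) = 0 for all ℓ ∈ Δ_q^φ(x); i.e. β({ω : ∃(q,φ,x), ω(Δ_q^φ(x)) = {0}}) = 0. -/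
/-!
Since the σ-algebra on `J` is arbitrary, `{ω ℓ = z}` need not be measurable; we replace it by
`ω ℓ ∈ A` with `A` the measurable atom of `z`. Configurations with every site in `A` lie in the
atom of the constant configuration, so they form a null event.

Every cone contains one of half-angle at most `π / 2` (hence convex) whose axis is a lattice
vector `m`, whose angle is rational and whose apex is a lattice point divided by a natural number,
so countably many cones suffice. Translating such a cone backwards along `m` gives cones that
increase and exhaust `ℤ^d`; the corresponding events decrease, have equal measure by shift
invariance, and their intersection is the null event above.
-/

open Real Filter MeasureTheory Set InnerProductGeometry Topology
open scoped RealInnerProductSpace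

lemma mem_measurableAtom_pi {ι : Type*} {X : ι → Type*} [∀ i, MeasurableSpace (X i)]
    {x y : ∀ i, X i} (h : ∀ i, y i ∈ measurableAtom (x i)) : y ∈ measurableAtom x := by
  let m : MeasurableSpace (∀ i, X i) :=
    { MeasurableSet' := fun s => (x ∈ s ↔ y ∈ s)
      measurableSet_empty := Iff.rfl
      measurableSet_compl := fun _ hs => not_congr hs
      measurableSet_iUnion := fun _ hs => by simp only [mem_iUnion]; exact exists_congr hs }
  have hle : MeasurableSpace.pi ≤ m := iSup_le fun i s ⟨t, ht, hts⟩ => by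
    subst hts
    have hyx : x i ∈ measurableAtom (y i) := by
      rw [measurableAtom_eq_of_mem (h i)]; exact mem_measurableAtom_self _
    exact ⟨fun hx => mem_of_mem_measurableAtom (h i) ht hx,
      fun hy => mem_of_mem_measurableAtom hyx ht hy⟩
  simp only [measurableAtom, mem_iInter]
  exact fun s hx hs => (hle s hs).1 hx

lemma measure_measurableAtom_eq_zero {α : Type*} [MeasurableSpace α] {μ : Measure α} {x : α}
    (h : μ {x} = 0) : μ (measurableAtom x) = 0 :=
  measure_mono_null (measurableAtom_subset (measurableSet_toMeasurable μ {x})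
    (subset_toMeasurable μ {x} rfl)) (by rwa [measure_toMeasurable])

lemma measure_pi_eq_zero_of_shift_invariant {G J : Type*} [AddCommGroup G] [Countable G]
    [MeasurableSpace J] {β : Measure (G → J)} [IsFiniteMeasure β]
    (hinv : ∀ g, MeasurePreserving (fun ω h => ω (h + g)) β β) {A : Set J} (hA : MeasurableSet A)
    (hA0 : β (univ.pi fun _ => A) = 0) {U : Set G} {k : G} (hUk : ∀ g ∈ U, g + k ∈ U)
    (hU : ∀ g, ∃ n : ℕ, g + n • k ∈ U) :
    β (U.pi fun _ => A) = 0 := by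
  set S : ℕ → Set (G → J) := fun n => {g | g + n • k ∈ U}.pi fun _ => A with hS
  have hS_zero : S 0 = U.pi fun _ => A := by simp [hS]
  have hS_meas : ∀ n, MeasurableSet (S n) := fun n => .pi (to_countable _) fun _ _ => hA
  have hS_shift : ∀ n, (fun ω h => ω (h + -(n • k))) ⁻¹' S 0 = S n := by
    intro n
    ext ω
    simp only [hS, zero_smul, add_zero, mem_preimage, Set.mem_pi]
    exact ⟨fun h g hg => by simpa using h _ hg, fun h g hg => h _ (by simpa using hg)⟩
  have hS_anti : Antitone S := antitone_nat_of_succ_le fun n ω hω g hg =>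
    hω g (show g + (n + 1) • k ∈ U by rw [succ_nsmul, ← add_assoc]; exact hUk _ hg)
  have hS_inter : ⋂ n, S n = univ.pi fun _ => A := by
    ext ω
    simp only [hS, mem_iInter, Set.mem_pi]
    exact ⟨fun h g _ => (hU g).elim fun n hn => h n g hn, fun h n g _ => h g trivial⟩
  have hS_eq : ∀ n, β (S n) = β (U.pi fun _ => A) := fun n => by
    rw [← hS_shift n, (hinv _).measure_preimage (hS_meas 0).nullMeasurableSet, hS_zero]
  calc β (U.pi fun _ => A) = ⨅ n, β (S n) := by simp only [hS_eq, iInf_const]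
    _ = 0 := by
      rw [← hS_anti.measure_iInter (fun n => (hS_meas n).nullMeasurableSet)
        ⟨0, measure_ne_top _ _⟩, hS_inter, hA0]

section AngleCone

variable {E : Type*} [NormedAddCommGroup E] [InnerProductSpace ℝ E]

def angleCone (v : E) (ψ : ℝ) : Set E := {u | angle v u < ψ}

lemma mem_angleCone {v u : E} {ψ : ℝ} : u ∈ angleCone v ψ ↔ angle v u < ψ := Iff.rfl

lemma mem_angleCone_iff_cos_mul_lt_inner {v u : E} {ψ : ℝ} (hψ0 : 0 ≤ ψ) (hψ : ψ ≤ π / 2) :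
    u ∈ angleCone v ψ ↔ cos ψ * (‖v‖ * ‖u‖) < ⟪v, u⟫ := by
  rcases eq_or_ne v 0 with rfl | hv
  · simpa [mem_angleCone, angle_zero_left] using hψ
  rcases eq_or_ne u 0 with rfl | hu
  · simpa [mem_angleCone, angle_zero_right] using hψ
  have hvu : 0 < ‖v‖ * ‖u‖ := by positivity
  rw [mem_angleCone, ← cos_angle_mul_norm_mul_norm, mul_lt_mul_iff_left₀ hvu,
    Real.strictAntiOn_cos.lt_iff_gt ⟨hψ0, by linarith [pi_pos]⟩
      ⟨angle_nonneg v u, angle_le_pi v u⟩]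

lemma add_mem_angleCone {v a b : E} {ψ : ℝ} (hψ : ψ ≤ π / 2) (ha : a ∈ angleCone v ψ)
    (hb : b ∈ angleCone v ψ) : a + b ∈ angleCone v ψ := by
  have hψ0 : 0 ≤ ψ := (angle_nonneg v a).trans ha.le
  rw [mem_angleCone_iff_cos_mul_lt_inner hψ0 hψ] at ha hb ⊢
  have hcos : 0 ≤ cos ψ * ‖v‖ :=
    mul_nonneg (cos_nonneg_of_mem_Icc ⟨by linarith, hψ⟩) (norm_nonneg v)
  calc cos ψ * (‖v‖ * ‖a + b‖) ≤ cos ψ * (‖v‖ * ‖a‖) + cos ψ * (‖v‖ * ‖b‖) := by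
        simpa only [← mul_assoc, ← mul_add] using mul_le_mul_of_nonneg_left (norm_add_le a b) hcos
    _ < ⟪v, a⟫ + ⟪v, b⟫ := add_lt_add ha hb
    _ = ⟪v, a + b⟫ := (inner_add_right v a b).symm

lemma smul_mem_angleCone {v u : E} {ψ t : ℝ} (ht : 0 < t) (hu : u ∈ angleCone v ψ) :
    t • u ∈ angleCone v ψ := by
  rwa [mem_angleCone, angle_smul_right_of_pos _ _ ht]

lemma angleCone_subset_angleCone {x v : E} {ψ φ : ℝ} (h : angle x v + ψ ≤ φ) :
    angleCone v ψ ⊆ angleCone x φ := fun u hu =>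
  (angle_le_angle_add_angle x v u).trans_lt (by rw [mem_angleCone] at hu; linarith)

lemma angleCone_mem_nhds {v : E} (hv : v ≠ 0) {ψ : ℝ} (hψ : 0 < ψ) : angleCone v ψ ∈ 𝓝 v := by
  have hcont : ContinuousAt (angle v) v :=
    (continuousAt_angle (x := (v, v)) hv hv).comp (continuousAt_const.prodMk continuousAt_id)
  exact hcont.eventually_lt continuousAt_const (by rwa [angle_self hv])

lemma exists_add_nsmul_mem_angleCone {v : E} (hv : v ≠ 0) {ψ : ℝ} (hψ : 0 < ψ) (w : E) :
    ∃ n : ℕ, w + n • v ∈ angleCone v ψ := by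
  have hlim : Tendsto (fun n : ℕ => v + (n : ℝ)⁻¹ • w) atTop (𝓝 v) := by
    simpa using tendsto_const_nhds.add
      (((tendsto_inv_atTop_zero (𝕜 := ℝ)).comp tendsto_natCast_atTop_atTop).smul_const w)
  obtain ⟨n, hn, hn0⟩ := ((hlim.eventually (angleCone_mem_nhds hv hψ)).and
    (eventually_gt_atTop 0)).exists
  refine ⟨n, ?_⟩
  have hn' : (0 : ℝ) < n := Nat.cast_pos.mpr hn0
  convert smul_mem_angleCone hn' hn using 1
  rw [smul_add, smul_inv_smul₀ hn'.ne', add_comm, Nat.cast_smul_eq_nsmul]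

end AngleCone

def latticeVec (d : ℕ) : (Fin d → ℤ) →+ EuclideanSpace ℝ (Fin d) :=
  AddMonoidHom.mk' (fun ℓ => (WithLp.equiv 2 (Fin d → ℝ)).symm fun i => (ℓ i : ℝ))
    fun a b => by ext i; simp

lemma latticeVec_apply {d : ℕ} (ℓ : Fin d → ℤ) (i : Fin d) : latticeVec d ℓ i = ℓ i := rfl

lemma tendsto_int_floor_mul_div_atTop (a : ℝ) :
    Tendsto (fun x : ℝ => (⌊a * x⌋ : ℝ) / x) atTop (𝓝 a) := by
  have hlow : Tendsto (fun x : ℝ => a - x⁻¹) atTop (𝓝 a) := by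
    simpa using tendsto_const_nhds.sub (tendsto_inv_atTop_zero (𝕜 := ℝ))
  refine tendsto_of_tendsto_of_tendsto_of_le_of_le' hlow tendsto_const_nhds ?_ ?_
  · filter_upwards [eventually_gt_atTop 0] with x hx
    rw [le_div_iff₀ hx, sub_mul, inv_mul_cancel₀ hx.ne']
    linarith [Int.lt_floor_add_one (a * x)]
  · filter_upwards [eventually_gt_atTop 0] with x hx
    rw [div_le_iff₀ hx, mul_comm]
    exact Int.floor_le _

lemma tendsto_inv_smul_latticeVec_floor {d : ℕ} (y : EuclideanSpace ℝ (Fin d)) :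
    Tendsto (fun N : ℕ => (N : ℝ)⁻¹ • latticeVec d fun i => ⌊y i * N⌋) atTop (𝓝 y) := by
  have hcoord : Tendsto (fun N : ℕ => fun i => (⌊y i * N⌋ : ℝ) / N) atTop (𝓝 (WithLp.ofLp y)) :=
    tendsto_pi_nhds.2 fun i =>
      (tendsto_int_floor_mul_div_atTop (y i)).comp tendsto_natCast_atTop_atTop
  convert ((PiLp.continuous_toLp 2 _).tendsto _).comp hcoord using 1
  ext N i
  simp [latticeVec_apply, div_eq_inv_mul]

lemma exists_latticeVec_angleCone_subset {d : ℕ} (q : EuclideanSpace ℝ (Fin d))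
    {x : EuclideanSpace ℝ (Fin d)} (hx : x ≠ 0) {φ : ℝ} (hφ : 0 < φ) :
    ∃ (N : ℕ) (a m : Fin d → ℤ) (ψ : ℚ), latticeVec d m ≠ 0 ∧ 0 < (ψ : ℝ) ∧ (ψ : ℝ) ≤ π / 2 ∧
      ∀ u, u - (N : ℝ)⁻¹ • latticeVec d a ∈ angleCone (latticeVec d m) ψ →
        u - q ∈ angleCone x φ := by
  set φ₀ := min φ (π / 2)
  have hφ₀ : 0 < φ₀ := lt_min hφ (by positivity)
  have hφ₀π : φ₀ ≤ π / 2 := min_le_right _ _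
  obtain ⟨ψ, hψ0, hψ⟩ := exists_rat_btwn (half_pos hφ₀)
  obtain ⟨N, hN, hN0⟩ := (((tendsto_inv_smul_latticeVec_floor x).eventually
    (angleCone_mem_nhds hx (half_pos hφ₀))).and (eventually_gt_atTop 0)).exists
  set m : Fin d → ℤ := fun i => ⌊x i * N⌋
  have hm : angle x (latticeVec d m) < φ₀ / 2 := by
    rwa [angle_smul_right_of_pos _ _ (inv_pos.2 (Nat.cast_pos.2 hN0))] at hN
  have hm0 : latticeVec d m ≠ 0 := by
    intro h
    rw [h, angle_zero_right] at hm
    linarith [min_le_right φ (π / 2)]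
  obtain ⟨N', hN'⟩ := ((tendsto_inv_smul_latticeVec_floor (q + x)).eventually
    ((continuous_sub_right q).continuousAt.preimage_mem_nhds
      (by simpa using angleCone_mem_nhds hx hφ₀))).exists
  refine ⟨N', fun i => ⌊(q + x) i * N'⌋, m, ψ, hm0, hψ0, by linarith, fun u hu => ?_⟩
  have hu' := add_mem_angleCone hφ₀π (angleCone_subset_angleCone (by linarith) hu) hN'
  rw [sub_add_sub_cancel] at hu'
  exact (mem_angleCone.1 hu').trans_le (min_le_left _ _)

lemma measure_pi_angleCone_eq_zero {d : ℕ} {J : Type*} [MeasurableSpace J]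
    {β : Measure ((Fin d → ℤ) → J)} [IsFiniteMeasure β]
    (hinv : ∀ g, MeasurePreserving (fun ω h => ω (h + g)) β β) {A : Set J} (hA : MeasurableSet A)
    (hA0 : β (univ.pi fun _ => A) = 0) (p : EuclideanSpace ℝ (Fin d)) {m : Fin d → ℤ}
    (hm : latticeVec d m ≠ 0) {ψ : ℝ} (hψ0 : 0 < ψ) (hψ : ψ ≤ π / 2) :
    β ({ℓ | latticeVec d ℓ - p ∈ angleCone (latticeVec d m) ψ}.pi fun _ => A) = 0 := by
  refine measure_pi_eq_zero_of_shift_invariant hinv hA hA0 (k := m) (fun g hg => ?_) fun g => ?_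
  · change latticeVec d (g + m) - p ∈ angleCone (latticeVec d m) ψ
    rw [map_add, add_sub_right_comm]
    exact add_mem_angleCone hψ hg (mem_of_mem_nhds (angleCone_mem_nhds hm hψ0))
  · obtain ⟨n, hn⟩ := exists_add_nsmul_mem_angleCone hm hψ0 (latticeVec d g - p)
    refine ⟨n, ?_⟩
    change latticeVec d (g + n • m) - p ∈ angleCone (latticeVec d m) ψ
    rwa [map_add, map_nsmul, add_sub_right_comm]

/-- For a shift-invariant probability measure on `Ω = J^{ℤ^d}`
giving measure zero to the constant-`0` configuration, almost surely there is no
Euclidean cone all of whose lattice points carry the trivial single site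
potential. -/
theorem stmt18 {d : ℕ} (J : Type*) [Fintype J] [MeasurableSpace J] (z : J)
    (β : Measure ((Fin d → ℤ) → J)) [IsProbabilityMeasure β]
    (θ : (Fin d → ℤ) → ((Fin d → ℤ) → J) → ((Fin d → ℤ) → J))
    (hθ : ∀ ℓ ω ℓ', θ ℓ ω ℓ' = ω (ℓ' + ℓ))
    (hinv : ∀ ℓ, MeasurePreserving (θ ℓ) β β)
    (hzero : β {fun _ => z} = 0) :
    β {ω | ∃ (q x : EuclideanSpace ℝ (Fin d)) (φ : ℝ),
        0 < φ ∧ φ ≤ Real.pi ∧ ‖x‖ = 1 ∧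
        ∀ ℓ : Fin d → ℤ,
          InnerProductGeometry.angle x
            ((WithLp.equiv 2 (Fin d → ℝ)).symm (fun i => (ℓ i : ℝ)) - q) < φ →
          ω ℓ = z} = 0 := by
  obtain rfl : θ = fun ℓ ω ℓ' => ω (ℓ' + ℓ) := by
    funext ℓ ω ℓ'
    exact hθ ℓ ω ℓ'
  set A := measurableAtom z
  have hA0 : β (univ.pi fun _ => A) = 0 :=
    measure_mono_null (fun ω hω => mem_measurableAtom_pi fun ℓ => hω ℓ trivial)
      (measure_measurableAtom_eq_zero hzero)
  refine measure_mono_null (t := ⋃ (N : ℕ) (a : Fin d → ℤ) (m : Fin d → ℤ) (ψ : ℚ)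
    (_ : latticeVec d m ≠ 0 ∧ 0 < (ψ : ℝ) ∧ (ψ : ℝ) ≤ π / 2),
      {ℓ | latticeVec d ℓ - (N : ℝ)⁻¹ • latticeVec d a ∈ angleCone (latticeVec d m) ψ}.pi
        fun _ => A) ?_ ?_
  · rintro ω ⟨q, x, φ, hφ, -, hx, hω⟩
    obtain ⟨N, a, m, ψ, hm, hψ0, hψ, hsub⟩ :=
      exists_latticeVec_angleCone_subset q (norm_ne_zero_iff.1 (hx.trans_ne one_ne_zero)) hφ
    simp only [mem_iUnion]
    exact ⟨N, a, m, ψ, ⟨hm, hψ0, hψ⟩, fun ℓ hℓ => hω ℓ (hsub _ hℓ) ▸ mem_measurableAtom_self z⟩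
  · simp only [measure_iUnion_null_iff]
    rintro N a m ψ ⟨hm, hψ0, hψ⟩
    exact measure_pi_angleCone_eq_zero hinv (.measurableAtom_of_countable z) hA0 _ hm hψ0 hψ
end
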